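/- arXiv:2409.14359 — 2 statements merged into one kernel-verified Lean document; each statement's English description precedes it below -/
import Mathlib

section
/- Let 𝔉 be a maximal commuting family of i-boxes in [a,b]. The map sending each i-box in 𝔉 to its effective end is a bijection from 𝔉 onto the integer interval [a,b]. -/
namespace IBoxes

variable {I : Type*}

/-- `gapBelow i x m` encodes `x₋ < m` : no position `t` with `m ≤ t < x` has the color of `x`. -/
def gapBelow (i : ℤ → I) (x m : ℤ) : Prop := ∀ t : ℤ, m ≤ t → t < x → i t ≠ i x

/-- `gapAbove i y m` encodes `m < y₊` : no position `t` with `y < t ≤ m` has the color of `y`. -/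
def gapAbove (i : ℤ → I) (y m : ℤ) : Prop := ∀ t : ℤ, y < t → t ≤ m → i t ≠ i y

/-- `[x,y]` is an `i`-box. -/
def IsBox (i : ℤ → I) (x y : ℤ) : Prop := x ≤ y ∧ i x = i y

/-- Two `i`-boxes commute: `(x₁)₋ < x₂ ≤ y₂ < (y₁)₊` or `(x₂)₋ < x₁ ≤ y₁ < (y₂)₊`. -/
def BoxCommute (i : ℤ → I) (x₁ y₁ x₂ y₂ : ℤ) : Prop :=
  (gapBelow i x₁ x₂ ∧ gapAbove i y₁ y₂) ∨ (gapBelow i x₂ x₁ ∧ gapAbove i y₂ y₁)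

/-- A commuting family of `i`-boxes. -/
def CommFamily (i : ℤ → I) (F : Set (ℤ × ℤ)) : Prop :=
  (∀ p ∈ F, IsBox i p.1 p.2) ∧ ∀ p ∈ F, ∀ q ∈ F, BoxCommute i p.1 p.2 q.1 q.2

/-- All boxes of the family lie in `[a,b]`. -/
def InRange (a b : ℤ) (F : Set (ℤ × ℤ)) : Prop := ∀ p ∈ F, a ≤ p.1 ∧ p.2 ≤ b

/-- A maximal commuting family of `i`-boxes in `[a,b]`. -/
def MaxCommFamily (i : ℤ → I) (a b : ℤ) (F : Set (ℤ × ℤ)) : Prop :=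
  CommFamily i F ∧ InRange a b F ∧
    ∀ G : Set (ℤ × ℤ), CommFamily i G → InRange a b G → F ⊆ G → F = G

/-- `x' = x₊`, the next position with the color of `x`. -/
def NextSame (i : ℤ → I) (x x' : ℤ) : Prop :=
  x < x' ∧ i x' = i x ∧ ∀ t : ℤ, x < t → t < x' → i t ≠ i x

/-- `y' = y₋`, the previous position with the color of `y`. -/
def PrevSame (i : ℤ → I) (y y' : ℤ) : Prop :=
  y' < y ∧ i y' = i y ∧ ∀ t : ℤ, y' < t → t < y → i t ≠ i y

/-- `p` is frozen in `[a,b]` : `(p.1)₋ < a` and `b < (p.2)₊`. -/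
def Frozen (i : ℤ → I) (a b : ℤ) (p : ℤ × ℤ) : Prop :=
  gapBelow i p.1 a ∧ gapAbove i p.2 b

/-- `p = [lo, hi}`, i.e. `p = [lo, hi(i lo)⁻]`. -/
def IsLBox (i : ℤ → I) (lo hi : ℤ) (p : ℤ × ℤ) : Prop :=
  p.1 = lo ∧ lo ≤ p.2 ∧ p.2 ≤ hi ∧ i p.2 = i lo ∧ ∀ t : ℤ, p.2 < t → t ≤ hi → i t ≠ i lo

/-- `p = {lo, hi]`, i.e. `p = [lo(i hi)⁺, hi]`. -/
def IsRBox (i : ℤ → I) (lo hi : ℤ) (p : ℤ × ℤ) : Prop :=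
  p.2 = hi ∧ lo ≤ p.1 ∧ p.1 ≤ hi ∧ i p.1 = i hi ∧ ∀ t : ℤ, lo ≤ t → t < p.1 → i t ≠ i hi

/-- An admissible chain of `i`-boxes `𝔠_k = box k` (for `1 ≤ k ≤ l`) with envelopes
`𝔠̃_k = [lo k, hi k]`. -/
structure AdmissibleChain (i : ℤ → I) (l : ℕ) where
  lo : ℕ → ℤ
  hi : ℕ → ℤ
  box : ℕ → ℤ × ℤ
  size : ∀ k : ℕ, 1 ≤ k → k ≤ l → hi k = lo k + (k : ℤ) - 1
  step : ∀ k : ℕ, 1 ≤ k → k < l →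
    (lo (k + 1) = lo k - 1 ∧ hi (k + 1) = hi k) ∨
    (lo (k + 1) = lo k ∧ hi (k + 1) = hi k + 1)
  box_spec : ∀ k : ℕ, 1 ≤ k → k ≤ l →
    IsLBox i (lo k) (hi k) (box k) ∨ IsRBox i (lo k) (hi k) (box k)
  cover : ∀ k : ℕ, 1 ≤ k → k ≤ l →
    Set.Icc (lo k) (hi k) = ⋃ j ∈ Set.Icc 1 k, Set.Icc ((box j).1) ((box j).2)

/-- The set of boxes appearing in an admissible chain. -/
def boxesOf {i : ℤ → I} {l : ℕ} (C : AdmissibleChain i l) : Set (ℤ × ℤ) :=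
  {p | ∃ k : ℕ, 1 ≤ k ∧ k ≤ l ∧ C.box k = p}

/-- The envelope `𝔠̃_k` as a set, with `𝔠̃_0 = ∅`. -/
def env {i : ℤ → I} {l : ℕ} (C : AdmissibleChain i l) (k : ℕ) : Set ℤ :=
  if k = 0 then ∅ else Set.Icc (C.lo k) (C.hi k)

/-- `z` is the effective end of the box `(x,y)` of the maximal commuting family `F` in `[a,b]`. -/
def IsEffectiveEnd (i : ℤ → I) (a b : ℤ) (F : Set (ℤ × ℤ)) (x y z : ℤ) : Prop :=
  z ∈ ({x, y} : Set ℤ) ∧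
    ∀ (l : ℕ) (C : AdmissibleChain i l), C.lo l = a → C.hi l = b → boxesOf C = F →
      ∀ k : ℕ, 1 ≤ k → k ≤ l → C.box k = (x, y) →
        ({z} : Set ℤ) = env C k \ env C (k - 1)

/-- `[x,y]` is in the left corner of `F`: `[x₊,y] ∈ F` and `[x,y₊] ∈ F`. -/
def LeftCorner (i : ℤ → I) (F : Set (ℤ × ℤ)) (x y : ℤ) : Prop :=
  (∃ x', NextSame i x x' ∧ (x', y) ∈ F) ∧ (∃ y', NextSame i y y' ∧ (x, y') ∈ F)

/-- `[x,y]` is in the right corner of `F`: `[x,y₋] ∈ F` and `[x₋,y] ∈ F`. -/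
def RightCorner (i : ℤ → I) (F : Set (ℤ × ℤ)) (x y : ℤ) : Prop :=
  (∃ y', PrevSame i y y' ∧ (x, y') ∈ F) ∧ (∃ x', PrevSame i x x' ∧ (x', y) ∈ F)

/-- The number of positions of color `j` in `[x,y]`. -/
noncomputable def colorCount (i : ℤ → I) (j : I) (x y : ℤ) : ℕ :=
  {s : ℤ | x ≤ s ∧ s ≤ y ∧ i s = j}.ncard


/-! ### Auxiliary development -/

theorem boxCommute_symm {i : ℤ → I} {x₁ y₁ x₂ y₂ : ℤ}
    (h : BoxCommute i x₁ y₁ x₂ y₂) : BoxCommute i x₂ y₂ x₁ y₁ := Or.symm h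

theorem boxCommute_self (i : ℤ → I) (x y : ℤ) : BoxCommute i x y x y :=
  Or.inl ⟨fun t h1 h2 => absurd h2 (not_lt.2 h1), fun t h1 h2 => absurd h1 (not_lt.2 h2)⟩

theorem no_cross (i : ℤ → I) {F : Set (ℤ × ℤ)} (hF : CommFamily i F) {x y' x'' y : ℤ}
    (h1 : (x, y') ∈ F) (h2 : (x'', y) ∈ F) (hx : x < x'') (hy : y' < y)
    (hc : i x = i x'') : False := by
  have hb1 := hF.1 _ h1
  have hb2 := hF.1 _ h2
  rcases hF.2 _ h1 _ h2 with ⟨_, hga⟩ | ⟨hgb, _⟩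
  · exact hga y hy le_rfl (hb2.2.symm.trans (hc.symm.trans hb1.2))
  · exact hgb x le_rfl hx hc

theorem nest (i : ℤ → I) {F : Set (ℤ × ℤ)} (hF : CommFamily i F) {p q : ℤ × ℤ}
    (hp : p ∈ F) (hq : q ∈ F) (hc : i p.1 = i q.1) :
    (p.1 ≤ q.1 ∧ q.2 ≤ p.2) ∨ (q.1 ≤ p.1 ∧ p.2 ≤ q.2) := by
  have hbp := hF.1 p hp
  have hbq := hF.1 q hq
  rcases hF.2 p hp q hq with ⟨hgb, hga⟩ | ⟨hgb, hga⟩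
  · left
    constructor
    · by_contra h
      push_neg at h
      exact hgb q.1 le_rfl h hc.symm
    · by_contra h
      push_neg at h
      exact hga q.2 h le_rfl (hbq.2.symm.trans (hc.symm.trans hbp.2))
  · right
    constructor
    · by_contra h
      push_neg at h
      exact hgb p.1 le_rfl h hc
    · by_contra h
      push_neg at h
      exact hga p.2 h le_rfl (hbp.2.symm.trans (hc.trans hbq.2))

open Classical in
/-- The effective end: the right end if the box has a proper subbox with the same
left end in the family, otherwise the left end. -/
noncomputable def effEnd (F : Set (ℤ × ℤ)) (p : ℤ × ℤ) : ℤ :=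
  if ∃ y', p.1 ≤ y' ∧ y' < p.2 ∧ (p.1, y') ∈ F then p.2 else p.1

theorem effEnd_eq_snd {F : Set (ℤ × ℤ)} {p : ℤ × ℤ}
    (h : ∃ y', p.1 ≤ y' ∧ y' < p.2 ∧ (p.1, y') ∈ F) : effEnd F p = p.2 := by
  unfold effEnd; exact if_pos h

theorem effEnd_eq_fst {F : Set (ℤ × ℤ)} {p : ℤ × ℤ}
    (h : ¬ ∃ y', p.1 ≤ y' ∧ y' < p.2 ∧ (p.1, y') ∈ F) : effEnd F p = p.1 := by
  unfold effEnd; exact if_neg h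

theorem mem_of_commAll (i : ℤ → I) {a b : ℤ} {F : Set (ℤ × ℤ)}
    (hF : MaxCommFamily i a b F) {c : ℤ × ℤ} (hbox : IsBox i c.1 c.2)
    (hr1 : a ≤ c.1) (hr2 : c.2 ≤ b)
    (hcom : ∀ q ∈ F, BoxCommute i c.1 c.2 q.1 q.2) : c ∈ F := by
  have hFG : F = insert c F := by
    apply hF.2.2
    · constructor
      · intro p hp
        rcases Set.mem_insert_iff.1 hp with h | hp'
        · rw [h]; exact hbox
        · exact hF.1.1 p hp' 
      · intro p hp q hq
        rcases Set.mem_insert_iff.1 hp with h | hp' <;>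
          rcases Set.mem_insert_iff.1 hq with h' | hq'
        · rw [h, h']; exact boxCommute_self i c.1 c.2
        · rw [h]; exact hcom q hq'
        · rw [h']; exact boxCommute_symm (hcom p hp')
        · exact hF.1.2 p hp' q hq'
    · intro p hp
      rcases Set.mem_insert_iff.1 hp with h | hp'
      · rw [h]; exact ⟨hr1, hr2⟩
      · exact hF.2.1 p hp' 
    · exact Set.subset_insert c F
  rw [hFG]; exact Set.mem_insert c F

theorem exists_cL (i : ℤ → I) {a b : ℤ} {F : Set (ℤ × ℤ)} (hab : a ≤ b)
    (hF : MaxCommFamily i a b F) :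
    ∃ M : ℤ, a ≤ M ∧ M ≤ b ∧ i M = i a ∧
      (∀ t, a ≤ t → t ≤ b → i t = i a → t ≤ M) ∧ (a, M) ∈ F := by
  classical
  obtain ⟨M, ⟨hMa, hMb, hMc⟩, hMmax⟩ :=
    Int.exists_greatest_of_bdd (P := fun t => a ≤ t ∧ t ≤ b ∧ i t = i a)
      ⟨b, fun z hz => hz.2.1⟩ ⟨a, le_rfl, hab, rfl⟩
  have hMmax' : ∀ t, a ≤ t → t ≤ b → i t = i a → t ≤ M := fun t h1 h2 h3 => hMmax t ⟨h1, h2, h3⟩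
  refine ⟨M, hMa, hMb, hMc, hMmax', ?_⟩
  apply mem_of_commAll i hF (c := (a, M)) ⟨hMa, hMc.symm⟩ le_rfl hMb
  intro q hq
  have hrq := hF.2.1 q hq
  left
  constructor
  · intro t h1 h2 _
    have := hrq.1
    omega
  · intro t h1 h2 h3
    have h4 : t ≤ M := hMmax' t (by omega) (by have := hrq.2; omega) (h3.trans hMc)
    omega

theorem exists_cR (i : ℤ → I) {a b : ℤ} {F : Set (ℤ × ℤ)} (hab : a ≤ b)
    (hF : MaxCommFamily i a b F) :
    ∃ m : ℤ, a ≤ m ∧ m ≤ b ∧ i m = i b ∧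
      (∀ t, a ≤ t → t ≤ b → i t = i b → m ≤ t) ∧ (m, b) ∈ F := by
  classical
  obtain ⟨m, ⟨hma, hmb, hmc⟩, hmmin⟩ :=
    Int.exists_least_of_bdd (P := fun t => a ≤ t ∧ t ≤ b ∧ i t = i b)
      ⟨a, fun z hz => hz.1⟩ ⟨b, hab, le_rfl, rfl⟩
  have hmmin' : ∀ t, a ≤ t → t ≤ b → i t = i b → m ≤ t := fun t h1 h2 h3 => hmmin t ⟨h1, h2, h3⟩
  refine ⟨m, hma, hmb, hmc, hmmin', ?_⟩
  apply mem_of_commAll i hF (c := (m, b)) ⟨hmb, hmc⟩ hma le_rfl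
  intro q hq
  have hrq := hF.2.1 q hq
  left
  constructor
  · intro t h1 h2 h3
    have h4 : m ≤ t := hmmin' t (by have := hrq.1; omega) (by omega) (h3.trans hmc)
    omega
  · intro t h1 h2 _
    have := hrq.2
    omega

theorem max_sub (i : ℤ → I) {a b : ℤ} {F : Set (ℤ × ℤ)} (hF : MaxCommFamily i a b F)
    {c : ℤ × ℤ} (hc : c ∈ F) {a' b' : ℤ} (ha' : a ≤ a') (hb' : b' ≤ b)
    (hcom : ∀ q : ℤ × ℤ, IsBox i q.1 q.2 → a ≤ q.1 → q.2 ≤ b → BoxCommute i c.1 c.2 q.1 q.2)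
    (hrange : ∀ p ∈ F, p ≠ c → a' ≤ p.1 ∧ p.2 ≤ b')
    (hne : ∀ q : ℤ × ℤ, a' ≤ q.1 → q.2 ≤ b' → q ≠ c) :
    MaxCommFamily i a' b' (F \ {c}) := by
  refine ⟨⟨fun p hp => hF.1.1 p hp.1, fun p hp q hq => hF.1.2 p hp.1 q hq.1⟩,
          fun p hp => hrange p hp.1 (by simpa using hp.2), ?_⟩
  intro G hGc hGr hGsub
  have hFG : F = insert c G := by
    apply hF.2.2
    · constructor
      · intro p hp
        rcases Set.mem_insert_iff.1 hp with h | hp'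
        · rw [h]; exact hF.1.1 c hc
        · exact hGc.1 p hp'
      · intro p hp q hq
        rcases Set.mem_insert_iff.1 hp with h | hp' <;>
          rcases Set.mem_insert_iff.1 hq with h' | hq'
        · rw [h, h']; exact boxCommute_self i c.1 c.2
        · rw [h]; exact hcom q (hGc.1 q hq') (le_trans ha' (hGr q hq').1) (le_trans (hGr q hq').2 hb')
        · rw [h']; exact boxCommute_symm (hcom p (hGc.1 p hp') (le_trans ha' (hGr p hp').1)
            (le_trans (hGr p hp').2 hb'))
        · exact hGc.2 p hp' q hq'
    · intro p hp
      rcases Set.mem_insert_iff.1 hp with h | hp'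
      · rw [h]; exact hF.2.1 c hc
      · exact ⟨le_trans ha' (hGr p hp').1, le_trans (hGr p hp').2 hb'⟩
    · intro p hp
      by_cases hpc : p = c
      · exact hpc ▸ Set.mem_insert c G
      · exact Set.mem_insert_of_mem c (hGsub ⟨hp, hpc⟩)
  apply Set.Subset.antisymm hGsub
  intro q hq
  have hqF : q ∈ F := by rw [hFG]; exact Set.mem_insert_of_mem c hq
  exact ⟨hqF, hne q (hGr q hq).1 (hGr q hq).2⟩

/-! ### Chain lemmas -/

/-- The new point of the envelope at step `k`. -/
def cnew {i : ℤ → I} {l : ℕ} (C : AdmissibleChain i l) (k : ℕ) : ℤ :=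
  if C.lo k = C.lo (k - 1) then C.hi k else C.lo k

theorem env_eq {i : ℤ → I} {l : ℕ} (C : AdmissibleChain i l) {k : ℕ} (hk : 1 ≤ k) :
    env C k = Set.Icc (C.lo k) (C.hi k) := by
  unfold env; rw [if_neg (by omega)]

theorem env_zero {i : ℤ → I} {l : ℕ} (C : AdmissibleChain i l) : env C 0 = ∅ := by
  unfold env; rw [if_pos rfl]

theorem cnew_lo_or_hi {i : ℤ → I} {l : ℕ} (C : AdmissibleChain i l) (k : ℕ) :
    cnew C k = C.lo k ∨ cnew C k = C.hi k := by
  unfold cnew; split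
  · exact Or.inr rfl
  · exact Or.inl rfl

theorem cnew_spec {i : ℤ → I} {l : ℕ} (C : AdmissibleChain i l) {k : ℕ}
    (hk1 : 1 ≤ k) (hkl : k ≤ l) :
    env C k = insert (cnew C k) (env C (k - 1)) ∧ cnew C k ∉ env C (k - 1) := by
  rcases eq_or_lt_of_le hk1 with h1 | h2
  · -- k = 1
    subst h1
    have hs := C.size 1 le_rfl hkl
    have hh : C.hi 1 = C.lo 1 := by omega
    have hc : cnew C 1 = C.lo 1 := by
      unfold cnew; split
      · exact hh
      · rfl
    constructor
    · rw [hc]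
      show env C 1 = insert (C.lo 1) (env C 0)
      rw [env_eq C le_rfl, env_zero, hh, Set.Icc_self]
      simp
    · rw [hc]
      show C.lo 1 ∉ env C 0
      rw [env_zero]
      simp
  · -- 2 ≤ k
    have hk2 : 2 ≤ k := h2
    have hstep := C.step (k - 1) (by omega) (by omega)
    have hke : k - 1 + 1 = k := by omega
    rw [hke] at hstep
    have hsz := C.size k hk1 hkl
    have hsz' := C.size (k - 1) (by omega) (by omega)
    have e1 : env C k = Set.Icc (C.lo k) (C.hi k) := env_eq C hk1
    have e2 : env C (k - 1) = Set.Icc (C.lo (k - 1)) (C.hi (k - 1)) := env_eq C (by omega)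
    rcases hstep with ⟨hlo, hhi⟩ | ⟨hlo, hhi⟩
    · have hcn : cnew C k = C.lo k := by
        unfold cnew; rw [if_neg (by omega)]
      constructor
      · rw [hcn, e1, e2]
        ext t
        simp only [Set.mem_insert_iff, Set.mem_Icc]
        omega
      · rw [hcn, e2]
        simp only [Set.mem_Icc]
        omega
    · have hcn : cnew C k = C.hi k := by
        unfold cnew; rw [if_pos hlo]
      constructor
      · rw [hcn, e1, e2]
        ext t
        simp only [Set.mem_insert_iff, Set.mem_Icc]
        omega
      · rw [hcn, e2]
        simp only [Set.mem_Icc]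
        omega

theorem env_mono {i : ℤ → I} {l : ℕ} (C : AdmissibleChain i l) :
    ∀ k, k ≤ l → ∀ j, j ≤ k → env C j ⊆ env C k := by
  intro k
  induction k with
  | zero =>
    intro _ j hj
    have : j = 0 := by omega
    rw [this]
  | succ k ih =>
    intro hkl j hj
    rcases Nat.eq_or_lt_of_le hj with he | hlt
    · rw [he]
    · have h1 : env C j ⊆ env C k := ih (by omega) j (by omega)
      have h2 : env C k ⊆ env C (k + 1) := by
        have h3 := (cnew_spec C (k := k + 1) (by omega) hkl).1
        have hke : k + 1 - 1 = k := by omega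
        rw [hke] at h3
        rw [h3]
        exact Set.subset_insert _ _
      exact h1.trans h2

theorem box_bounds {i : ℤ → I} {l : ℕ} (C : AdmissibleChain i l) {k : ℕ}
    (hk1 : 1 ≤ k) (hkl : k ≤ l) :
    C.lo k ≤ (C.box k).1 ∧ (C.box k).2 ≤ C.hi k := by
  rcases C.box_spec k hk1 hkl with h | h
  · exact ⟨le_of_eq h.1.symm, h.2.2.1⟩
  · exact ⟨h.2.1, le_of_eq h.1⟩

theorem box_sub {i : ℤ → I} {l : ℕ} (C : AdmissibleChain i l) {k : ℕ}
    (hk1 : 1 ≤ k) (hkl : k ≤ l) :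
    Set.Icc ((C.box k).1) ((C.box k).2) ⊆ env C k := by
  rw [env_eq C hk1]
  exact Set.Icc_subset_Icc (box_bounds C hk1 hkl).1 (box_bounds C hk1 hkl).2

theorem cnew_mem_box {i : ℤ → I} {l : ℕ} (C : AdmissibleChain i l) {k : ℕ}
    (hk1 : 1 ≤ k) (hkl : k ≤ l) :
    cnew C k ∈ Set.Icc ((C.box k).1) ((C.box k).2) := by
  obtain ⟨henv, hnot⟩ := cnew_spec C hk1 hkl
  have hmem : cnew C k ∈ env C k := by rw [henv]; exact Set.mem_insert _ _
  rw [env_eq C hk1, C.cover k hk1 hkl] at hmem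
  simp only [Set.mem_iUnion, exists_prop] at hmem
  obtain ⟨j, hj, hjm⟩ := hmem
  rw [Set.mem_Icc] at hj
  rcases Nat.eq_or_lt_of_le hj.2 with he | hlt
  · rw [he] at hjm; exact hjm
  · exfalso
    apply hnot
    exact env_mono C (k - 1) (by omega) j (by omega) (box_sub C hj.1 (by omega) hjm)

theorem cnew_endpoint {i : ℤ → I} {l : ℕ} (C : AdmissibleChain i l) {k : ℕ}
    (hk1 : 1 ≤ k) (hkl : k ≤ l) :
    cnew C k = (C.box k).1 ∨ cnew C k = (C.box k).2 := by
  have hm := cnew_mem_box C hk1 hkl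
  rw [Set.mem_Icc] at hm
  have hb := box_bounds C hk1 hkl
  rcases cnew_lo_or_hi C k with h | h <;> omega

theorem env_rep {i : ℤ → I} {l : ℕ} (C : AdmissibleChain i l) :
    ∀ m, m ≤ l → ∀ w ∈ env C m, ∃ k', 1 ≤ k' ∧ k' ≤ m ∧ cnew C k' = w := by
  intro m
  induction m with
  | zero =>
    intro _ w hw
    rw [env_zero] at hw
    exact absurd hw (Set.notMem_empty w)
  | succ m ih =>
    intro hml w hw
    obtain ⟨henv, _⟩ := cnew_spec C (k := m + 1) (by omega) hml
    have hke : m + 1 - 1 = m := by omega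
    rw [hke] at henv
    rw [henv] at hw
    rcases Set.mem_insert_iff.1 hw with h | h
    · exact ⟨m + 1, by omega, le_rfl, h.symm⟩
    · obtain ⟨k', h1, h2, h3⟩ := ih (by omega) w h
      exact ⟨k', h1, by omega, h3⟩

theorem effEnd_chain (i : ℤ → I) {a b : ℤ} {F : Set (ℤ × ℤ)} (hF : MaxCommFamily i a b F)
    {l : ℕ} (C : AdmissibleChain i l) (hboxes : boxesOf C = F)
    {k : ℕ} (hk1 : 1 ≤ k) (hkl : k ≤ l) :
    effEnd F (C.box k) = cnew C k := by
  have hpF : C.box k ∈ F := by rw [← hboxes]; exact ⟨k, hk1, hkl, rfl⟩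
  obtain ⟨hple, hpc⟩ := hF.1.1 _ hpF
  obtain ⟨henv, hnot⟩ := cnew_spec C hk1 hkl
  have hzmem := cnew_mem_box C hk1 hkl
  rw [Set.mem_Icc] at hzmem
  have hzend := cnew_endpoint C hk1 hkl
  by_cases hxy : (C.box k).1 = (C.box k).2
  · have hz : cnew C k = (C.box k).1 := by rcases hzend with h | h <;> omega
    rw [hz]
    apply effEnd_eq_fst
    rintro ⟨y', h1, h2, _⟩
    omega
  · rcases hzend with hz | hz
    · -- new point is the left end; show there is no witness
      have hwmem : (C.box k).2 ∈ env C (k - 1) := by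
        have h1 : (C.box k).2 ∈ env C k := box_sub C hk1 hkl (Set.mem_Icc.2 ⟨hple, le_rfl⟩)
        rw [henv] at h1
        rcases Set.mem_insert_iff.1 h1 with h | h
        · exfalso; omega
        · exact h
      obtain ⟨k', hk'1, hk'm, hk'c⟩ := env_rep C (k - 1) (by omega) _ hwmem
      have hk'l : k' ≤ l := by omega
      have hqF : C.box k' ∈ F := by rw [← hboxes]; exact ⟨k', hk'1, hk'l, rfl⟩
      obtain ⟨hqle, hqc⟩ := hF.1.1 _ hqF
      have hqend := cnew_endpoint C hk'1 hk'l
      rw [hk'c] at hqend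
      have hcol : i (C.box k).1 = i (C.box k').1 := by
        rcases hqend with h | h
        · rw [hpc, h]
        · rw [hpc, h, ← hqc]
      have hsubq : Set.Icc ((C.box k').1) ((C.box k').2) ⊆ env C (k - 1) :=
        (box_sub C hk'1 hk'l).trans (env_mono C (k - 1) (by omega) k' hk'm)
      rcases nest i hF.1 hpF hqF hcol with ⟨h1, h2⟩ | ⟨h1, h2⟩
      · have hq2 : (C.box k').2 = (C.box k).2 := by rcases hqend with h | h <;> omega
        have hqnep : (C.box k).1 < (C.box k').1 := by
          rcases eq_or_lt_of_le h1 with h | h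
          · exfalso
            apply hnot
            apply hsubq
            exact Set.mem_Icc.2 ⟨by omega, by omega⟩
          · exact h
        rw [hz]
        apply effEnd_eq_fst
        rintro ⟨y', hy1, hy2, hy3⟩
        exact no_cross i hF.1 hy3
          (show ((C.box k').1, (C.box k').2) ∈ F by rw [Prod.mk.eta]; exact hqF)
          hqnep (by omega) hcol
      · exfalso
        exact hnot (hsubq (Set.mem_Icc.2 ⟨by omega, by omega⟩))
    · -- new point is the right end; exhibit a witness
      have hwmem : (C.box k).1 ∈ env C (k - 1) := by
        have h1 : (C.box k).1 ∈ env C k := box_sub C hk1 hkl (Set.mem_Icc.2 ⟨le_rfl, hple⟩)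
        rw [henv] at h1
        rcases Set.mem_insert_iff.1 h1 with h | h
        · exfalso; omega
        · exact h
      obtain ⟨k', hk'1, hk'm, hk'c⟩ := env_rep C (k - 1) (by omega) _ hwmem
      have hk'l : k' ≤ l := by omega
      have hqF : C.box k' ∈ F := by rw [← hboxes]; exact ⟨k', hk'1, hk'l, rfl⟩
      obtain ⟨hqle, hqc⟩ := hF.1.1 _ hqF
      have hqend := cnew_endpoint C hk'1 hk'l
      rw [hk'c] at hqend
      have hcol : i (C.box k).1 = i (C.box k').1 := by
        rcases hqend with h | h
        · rw [h]
        · rw [h]; exact hqc.symm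
      have hsubq : Set.Icc ((C.box k').1) ((C.box k').2) ⊆ env C (k - 1) :=
        (box_sub C hk'1 hk'l).trans (env_mono C (k - 1) (by omega) k' hk'm)
      rcases nest i hF.1 hpF hqF hcol with ⟨h1, h2⟩ | ⟨h1, h2⟩
      · have hq1 : (C.box k').1 = (C.box k).1 := by rcases hqend with h | h <;> omega
        have hq2 : (C.box k').2 < (C.box k).2 := by
          rcases eq_or_lt_of_le h2 with h | h
          · exfalso
            apply hnot
            apply hsubq
            exact Set.mem_Icc.2 ⟨by omega, by omega⟩
          · exact h
        rw [hz]
        apply effEnd_eq_snd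
        exact ⟨(C.box k').2, by omega, hq2, by rw [← hq1, Prod.mk.eta]; exact hqF⟩
      · exfalso
        exact hnot (hsubq (Set.mem_Icc.2 ⟨by omega, by omega⟩))

/-! ### Surjectivity -/

theorem surj_aux (i : ℤ → I) (n : ℕ) : ∀ a b : ℤ, b = a + (n : ℤ) →
    ∀ F : Set (ℤ × ℤ), MaxCommFamily i a b F →
    ∀ z : ℤ, a ≤ z → z ≤ b → ∃ p ∈ F, effEnd F p = z := by
  induction n with
  | zero =>
    intro a b hb F hF z hz1 hz2
    obtain ⟨M, hMa, hMb, _, _, hMF⟩ := exists_cL i (by omega) hF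
    refine ⟨(a, M), hMF, ?_⟩
    rw [effEnd_eq_fst ?_]
    · show a = z
      omega
    · rintro ⟨y', h1, h2, _⟩
      have h1' : a ≤ y' := h1
      have h2' : y' < M := h2
      omega
  | succ n ih =>
    intro a b hb F hF z hz1 hz2
    have hab : a < b := by omega
    obtain ⟨M, hMa, hMb, hMc, hMmax, hMF⟩ := exists_cL i (by omega) hF
    obtain ⟨m, hma, hmb, hmc, hmmin, hmF⟩ := exists_cR i (by omega) hF
    by_cases hA : ∃ p ∈ F, p.1 = a ∧ p ≠ (a, M)
    · -- extra box at `a`: remove the box `(m, b)`, recurse on `[a, b-1]`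
      obtain ⟨e, heF, he1, heM⟩ := hA
      have hbe := hF.1.1 e heF
      have hre := hF.2.1 e heF
      have he2M : e.2 < M := by
        have h1 : e.2 ≤ M := hMmax e.2 (by have := hbe.1; omega) hre.2
          (by rw [← hbe.2, he1])
        have h2 : e.2 ≠ M := by
          intro h
          exact heM (Prod.ext_iff.2 ⟨he1, h⟩)
        omega
      have hnoB : ∀ p ∈ F, p.2 = b → p = (m, b) := by
        intro p hpF hpb
        by_contra hne
        have hbp := hF.1.1 p hpF
        have hrp := hF.2.1 p hpF
        have hmp : m < p.1 := by
          have h1 : m ≤ p.1 := hmmin p.1 hrp.1 (by have := hbp.1; omega)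
            (by rw [hbp.2, hpb])
          have h2 : p.1 ≠ m := fun h => hne (Prod.ext_iff.2 ⟨h, hpb⟩)
          omega
        rcases hF.1.2 e heF p hpF with ⟨_, hga⟩ | ⟨hgb, _⟩
        · exact hga M he2M (by omega) (by rw [hMc, ← he1, hbe.2])
        · exact hgb m (by rw [he1]; exact hma) hmp (by rw [hmc, hbp.2, hpb])
      have hF' : MaxCommFamily i a (b - 1) (F \ {(m, b)}) := by
        apply max_sub i hF hmF le_rfl (by omega)
        · intro q hqbox hq1 hq2
          left
          constructor
          · intro t h1 h2 h3
            have h4 : m ≤ t := hmmin t (by omega) (by omega) (h3.trans hmc)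
            omega
          · intro t h1 h2 _
            omega
        · intro p hp hne
          refine ⟨(hF.2.1 p hp).1, ?_⟩
          have h1 := (hF.2.1 p hp).2
          rcases eq_or_lt_of_le h1 with h | h
          · exact absurd (hnoB p hp h) hne
          · omega
        · intro q h1 h2 hqe
          rw [hqe] at h2
          have : b ≤ b - 1 := h2
          omega
      have hag : ∀ p ∈ F \ {(m, b)}, effEnd (F \ {(m, b)}) p = effEnd F p := by
        intro p hp
        have hp2 : p.2 ≤ b - 1 := (hF'.2.1 p hp).2
        by_cases hw : ∃ y', p.1 ≤ y' ∧ y' < p.2 ∧ (p.1, y') ∈ F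
        · obtain ⟨y', h1, h2, h3⟩ := hw
          have h3' : (p.1, y') ∈ F \ {(m, b)} := by
            refine ⟨h3, ?_⟩
            intro hc
            rw [Set.mem_singleton_iff] at hc
            have : y' = b := congrArg Prod.snd hc
            omega
          rw [effEnd_eq_snd ⟨y', h1, h2, h3'⟩, effEnd_eq_snd ⟨y', h1, h2, h3⟩]
        · rw [effEnd_eq_fst (fun ⟨y', h1, h2, h3⟩ => hw ⟨y', h1, h2, h3.1⟩),
            effEnd_eq_fst hw]
      by_cases hz : z = b
      · by_cases hw : ∃ y', m ≤ y' ∧ y' < b ∧ (m, y') ∈ F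
        · refine ⟨(m, b), hmF, ?_⟩
          rw [effEnd_eq_snd hw]
          exact hz.symm
        · have hmbEq : m = b := by
            by_contra hmb'
            have hmlt : m < b := by omega
            obtain ⟨w, ⟨hw1, hw2, hw3⟩, hwmax⟩ :=
              Int.exists_greatest_of_bdd (P := fun t => m ≤ t ∧ t ≤ b - 1 ∧ i t = i b)
                ⟨b - 1, fun t ht => ht.2.1⟩ ⟨m, le_rfl, by omega, hmc⟩
            have hwF : (m, w) ∈ F := by
              apply mem_of_commAll i hF (c := (m, w)) ⟨hw1, by rw [hmc, hw3]⟩ hma (by omega)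
              intro q hq
              have hrq := hF.2.1 q hq
              by_cases hq2 : q.2 = b
              · have hqeq : q = (m, b) := hnoB q hq hq2
                right
                rw [hqeq]
                constructor
                · intro t h1 h2 _
                  have h1' : (m : ℤ) ≤ t := h1
                  have h2' : t < (m : ℤ) := h2
                  omega
                · intro t h1 h2 _
                  have h1' : (b : ℤ) < t := h1
                  omega
              · left
                constructor
                · intro t h1 h2 h3
                  have h4 : m ≤ t := hmmin t (by have := hrq.1; omega) (by omega)
                    (h3.trans hmc)
                  omega
                · intro t h1 h2 h3
                  have h5 : t ≤ w := hwmax t ⟨by omega, by have := hrq.2; omega,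
                    h3.trans hw3⟩
                  omega
            exact hw ⟨w, hw1, by omega, hwF⟩
          refine ⟨(m, b), hmF, ?_⟩
          rw [effEnd_eq_fst hw]
          show m = z
          omega
      · obtain ⟨p, hp, hep⟩ := ih a (b - 1) (by omega) _ hF' z hz1 (by omega)
        exact ⟨p, hp.1, by rw [← hag p hp]; exact hep⟩
    · -- no extra box at `a`: remove the box `(a, M)`, recurse on `[a+1, b]`
      push_neg at hA
      have hF' : MaxCommFamily i (a + 1) b (F \ {(a, M)}) := by
        apply max_sub i hF hMF (by omega) le_rfl
        · intro q hqbox hq1 hq2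
          left
          constructor
          · intro t h1 h2 _
            omega
          · intro t h1 h2 h3
            have h4 : t ≤ M := hMmax t (by omega) (by omega) (h3.trans hMc)
            omega
        · intro p hp hne
          refine ⟨?_, (hF.2.1 p hp).2⟩
          have h1 := (hF.2.1 p hp).1
          have h2 : p.1 ≠ a := fun h => hne (hA p hp h)
          omega
        · intro q h1 h2 hqe
          rw [hqe] at h1
          have : a + 1 ≤ a := h1
          omega
      have hag : ∀ p ∈ F \ {(a, M)}, effEnd (F \ {(a, M)}) p = effEnd F p := by
        intro p hp
        have hp1 : a + 1 ≤ p.1 := (hF'.2.1 p hp).1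
        by_cases hw : ∃ y', p.1 ≤ y' ∧ y' < p.2 ∧ (p.1, y') ∈ F
        · obtain ⟨y', h1, h2, h3⟩ := hw
          have h3' : (p.1, y') ∈ F \ {(a, M)} := by
            refine ⟨h3, ?_⟩
            intro hc
            rw [Set.mem_singleton_iff] at hc
            have : p.1 = a := congrArg Prod.fst hc
            omega
          rw [effEnd_eq_snd ⟨y', h1, h2, h3'⟩, effEnd_eq_snd ⟨y', h1, h2, h3⟩]
        · rw [effEnd_eq_fst (fun ⟨y', h1, h2, h3⟩ => hw ⟨y', h1, h2, h3.1⟩),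
            effEnd_eq_fst hw]
      by_cases hz : z = a
      · refine ⟨(a, M), hMF, ?_⟩
        rw [effEnd_eq_fst ?_]
        · exact hz.symm
        · rintro ⟨y', h1, h2, h3⟩
          have h4 := hA _ h3 rfl
          have h5 : y' = M := congrArg Prod.snd h4
          have h2' : y' < M := h2
          omega
      · obtain ⟨p, hp, hep⟩ := ih (a + 1) b (by omega) _ hF' z (by omega) hz2
        exact ⟨p, hp.1, by rw [← hag p hp]; exact hep⟩

/-! ### Main theorem -/

theorem effectiveEnd_bijOn' (i : ℤ → I) (a b : ℤ) (hab : a ≤ b)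
    (F : Set (ℤ × ℤ)) (hF : MaxCommFamily i a b F) :
    ∃ f : ℤ × ℤ → ℤ, (∀ p ∈ F, IsEffectiveEnd i a b F p.1 p.2 (f p)) ∧
      Set.BijOn f F (Set.Icc a b) := by
  classical
  refine ⟨effEnd F, fun p hp => ⟨?_, ?_⟩, ?_, ?_, ?_⟩
  · -- effEnd F p ∈ {p.1, p.2}
    by_cases hw : ∃ y', p.1 ≤ y' ∧ y' < p.2 ∧ (p.1, y') ∈ F
    · rw [effEnd_eq_snd hw]; simp
    · rw [effEnd_eq_fst hw]; simp
  · -- the chain condition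
    intro l C hlo hhi hboxes k hk1 hkl hpk
    rw [Prod.mk.eta] at hpk
    obtain ⟨henv, hnot⟩ := cnew_spec C hk1 hkl
    have h1 := effEnd_chain i hF C hboxes hk1 hkl
    rw [hpk] at h1
    rw [h1, henv]
    ext t
    simp only [Set.mem_singleton_iff, Set.mem_diff, Set.mem_insert_iff]
    constructor
    · rintro rfl
      exact ⟨Or.inl rfl, hnot⟩
    · rintro ⟨h | h, hn⟩
      · exact h
      · exact absurd h hn
  · -- MapsTo
    intro p hp
    obtain ⟨h1, h2⟩ := hF.2.1 p hp
    obtain ⟨h3, _⟩ := hF.1.1 p hp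
    by_cases hw : ∃ y', p.1 ≤ y' ∧ y' < p.2 ∧ (p.1, y') ∈ F
    · rw [effEnd_eq_snd hw, Set.mem_Icc]; omega
    · rw [effEnd_eq_fst hw, Set.mem_Icc]; omega
  · -- InjOn
    intro p hp q hq heq
    have hbp := hF.1.1 p hp
    have hbq := hF.1.1 q hq
    by_cases hWp : ∃ y', p.1 ≤ y' ∧ y' < p.2 ∧ (p.1, y') ∈ F <;>
      by_cases hWq : ∃ y', q.1 ≤ y' ∧ y' < q.2 ∧ (q.1, y') ∈ F
    · -- both right ends
      rw [effEnd_eq_snd hWp, effEnd_eq_snd hWq] at heq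
      obtain ⟨yp, hp1, hp2, hp3⟩ := hWp
      obtain ⟨yq, hq1, hq2, hq3⟩ := hWq
      rcases lt_trichotomy p.1 q.1 with h | h | h
      · exact absurd (no_cross i hF.1 hp3
          (show (q.1, q.2) ∈ F by rw [Prod.mk.eta]; exact hq) h (by omega)
          (by rw [hbp.2, heq, hbq.2])) id
      · exact Prod.ext_iff.2 ⟨h, heq⟩
      · exact absurd (no_cross i hF.1 hq3
          (show (p.1, p.2) ∈ F by rw [Prod.mk.eta]; exact hp) h (by omega)
          (by rw [hbq.2, ← heq, hbp.2])) id
    · -- p right end, q left end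
      rw [effEnd_eq_snd hWp, effEnd_eq_fst hWq] at heq
      obtain ⟨yp, hp1, hp2, hp3⟩ := hWp
      exact absurd (no_cross i hF.1 hp3
        (show (q.1, q.2) ∈ F by rw [Prod.mk.eta]; exact hq) (by omega)
        (by have := hbq.1; omega) (by rw [hbp.2, heq])) id
    · -- p left end, q right end
      rw [effEnd_eq_fst hWp, effEnd_eq_snd hWq] at heq
      obtain ⟨yq, hq1, hq2, hq3⟩ := hWq
      exact absurd (no_cross i hF.1 hq3
        (show (p.1, p.2) ∈ F by rw [Prod.mk.eta]; exact hp) (by omega)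
        (by have := hbp.1; omega) (by rw [hbq.2, ← heq])) id
    · -- both left ends
      rw [effEnd_eq_fst hWp, effEnd_eq_fst hWq] at heq
      have h2 : p.2 = q.2 := by
        rcases lt_trichotomy p.2 q.2 with h | h | h
        · exact absurd (⟨p.2, by have := hbp.1; omega, h, by rw [← heq, Prod.mk.eta]; exact hp⟩ :
            ∃ y', q.1 ≤ y' ∧ y' < q.2 ∧ (q.1, y') ∈ F) hWq
        · exact h
        · exact absurd (⟨q.2, by have := hbq.1; omega, h,
            by rw [heq, Prod.mk.eta]; exact hq⟩ :
            ∃ y', p.1 ≤ y' ∧ y' < p.2 ∧ (p.1, y') ∈ F) hWp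
      exact Prod.ext_iff.2 ⟨heq, h2⟩
  · -- SurjOn
    intro z hz
    rw [Set.mem_Icc] at hz
    obtain ⟨p, hp, he⟩ := surj_aux i (b - a).toNat a b (by omega) F hF z hz.1 hz.2
    exact ⟨p, hp, he⟩

/-- The effective-end map is a bijection from `F` onto `[a,b]`. -/
theorem effectiveEnd_bijOn (i : ℤ → I) (a b : ℤ) (hab : a ≤ b)
    (F : Set (ℤ × ℤ)) (hF : MaxCommFamily i a b F) :
    ∃ f : ℤ × ℤ → ℤ, (∀ p ∈ F, IsEffectiveEnd i a b F p.1 p.2 (f p)) ∧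
      Set.BijOn f F (Set.Icc a b) := by
  exact effectiveEnd_bijOn' i a b hab F hF

end IBoxes
end

section
/- Let 𝔉 be a maximal commuting family of i-boxes in [a,b] and [x,y] ∈ 𝔉. (i) If x is the effective end of [x,y] and x' satisfies a ≤ x' ≤ y and x'₋ ≤ x < y, then there exists y' ≥ x' such that [x',y'] ∈ 𝔉 with effective end x'. (ii) If y is the effective end of [x,y] and y' satisfies x ≤ y' ≤ b and x < y ≤ y'₊, then there exists x' ≤ y' such that [x',y'] ∈ 𝔉 with effective end y'. -/
namespace IBoxes

variable {I : Type*}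

namespace AdmissibleChain

variable {I : Type*} {i : ℤ → I} {l : ℕ} (C : AdmissibleChain i l)

lemma lo_le_hi {k : ℕ} (hk1 : 1 ≤ k) (hkl : k ≤ l) : C.lo k ≤ C.hi k := by
  have := C.size k hk1 hkl; omega

lemma mono {j k : ℕ} (hj : 1 ≤ j) (hjk : j ≤ k) (hkl : k ≤ l) :
    C.lo k ≤ C.lo j ∧ C.hi j ≤ C.hi k := by
  induction k with
  | zero => omega
  | succ k ih =>
    rcases Nat.lt_or_ge j (k+1) with h | h
    · have h1 : 1 ≤ k := by omega
      have h2 := ih (by omega) (by omega)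
      rcases C.step k h1 (by omega) with ⟨hl, hh⟩ | ⟨hl, hh⟩ <;> omega
    · have : j = k + 1 := by omega
      subst this; exact ⟨le_refl _, le_refl _⟩

lemma box_bounds {k : ℕ} (hk1 : 1 ≤ k) (hkl : k ≤ l) :
    C.lo k ≤ (C.box k).1 ∧ (C.box k).1 ≤ (C.box k).2 ∧ (C.box k).2 ≤ C.hi k ∧
      i (C.box k).1 = i (C.box k).2 := by
  rcases C.box_spec k hk1 hkl with ⟨h1, h2, h3, h4, _⟩ | ⟨h1, h2, h3, h4, _⟩
  · exact ⟨le_of_eq h1.symm, by omega, h3, by rw [h1]; exact h4.symm⟩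
  · exact ⟨h2, by omega, le_of_eq h1, by rw [h1]; exact h4⟩

lemma cover_mem {k : ℕ} (hk1 : 1 ≤ k) (hkl : k ≤ l) {p : ℤ}
    (h1 : C.lo k ≤ p) (h2 : p ≤ C.hi k) :
    ∃ j, 1 ≤ j ∧ j ≤ k ∧ (C.box j).1 ≤ p ∧ p ≤ (C.box j).2 := by
  have h := C.cover k hk1 hkl
  have hp : p ∈ Set.Icc (C.lo k) (C.hi k) := ⟨h1, h2⟩
  rw [h] at hp
  simp only [Set.mem_iUnion, Set.mem_Icc, exists_prop] at hp
  obtain ⟨j, ⟨hj1, hjk⟩, hpj⟩ := hp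
  exact ⟨j, hj1, hjk, hpj.1, hpj.2⟩

lemma KL_left {m : ℕ} (hm : 1 ≤ m) (hml : m + 1 ≤ l) (hL : C.lo (m+1) = C.lo m - 1) :
    (C.box (m+1)).1 = C.lo (m+1) := by
  obtain ⟨j, hj1, hjk, h1, h2⟩ := C.cover_mem (show 1 ≤ m+1 by omega) hml
    (le_refl (C.lo (m+1))) (C.lo_le_hi (by omega) hml)
  rcases Nat.lt_or_ge j (m+1) with h | h
  · have hmono := C.mono hj1 (show j ≤ m by omega) (by omega)
    have hb := C.box_bounds hj1 (by omega)
    omega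
  · have : j = m + 1 := by omega
    subst this
    have hb := C.box_bounds (show 1 ≤ m+1 by omega) hml
    omega

lemma KL_right {m : ℕ} (hm : 1 ≤ m) (hml : m + 1 ≤ l) (hR : C.hi (m+1) = C.hi m + 1) :
    (C.box (m+1)).2 = C.hi (m+1) := by
  obtain ⟨j, hj1, hjk, h1, h2⟩ := C.cover_mem (show 1 ≤ m+1 by omega) hml
    (C.lo_le_hi (by omega) hml) (le_refl (C.hi (m+1)))
  rcases Nat.lt_or_ge j (m+1) with h | h
  · have hmono := C.mono hj1 (show j ≤ m by omega) (by omega)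
    have hb := C.box_bounds hj1 (by omega)
    omega
  · have : j = m + 1 := by omega
    subst this
    have hb := C.box_bounds (show 1 ≤ m+1 by omega) hml
    omega

lemma box_one (hl : 1 ≤ l) : (C.box 1).1 = C.lo 1 ∧ (C.box 1).2 = C.lo 1 := by
  have hs := C.size 1 (le_refl 1) hl
  have hb := C.box_bounds (le_refl 1) hl
  omega

/-- `p` enters the envelope exactly at step `k`. -/
def addedAt (C : AdmissibleChain i l) (k : ℕ) (p : ℤ) : Prop :=
  1 ≤ k ∧ k ≤ l ∧ C.lo k ≤ p ∧ p ≤ C.hi k ∧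
    ∀ j, 1 ≤ j → j < k → ¬(C.lo j ≤ p ∧ p ≤ C.hi j)

lemma addedAt_exists (hl : 1 ≤ l) {p : ℤ} (hp1 : C.lo l ≤ p) (hp2 : p ≤ C.hi l) :
    ∃ k, C.addedAt k p := by
  classical
  have hex : ∃ k, 1 ≤ k ∧ k ≤ l ∧ C.lo k ≤ p ∧ p ≤ C.hi k := ⟨l, hl, le_refl _, hp1, hp2⟩
  have hspec := Nat.find_spec hex
  refine ⟨Nat.find hex, hspec.1, hspec.2.1, hspec.2.2.1, hspec.2.2.2, ?_⟩
  rintro j hj1 hjk ⟨ha, hb⟩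
  exact Nat.find_min hex hjk ⟨hj1, by omega, ha, hb⟩

lemma addedAt_le {k : ℕ} {p : ℤ} (h : C.addedAt k p) {j : ℕ} (hj1 : 1 ≤ j)
    (h2 : C.lo j ≤ p) (h3 : p ≤ C.hi j) : k ≤ j := by
  by_contra hc
  exact h.2.2.2.2 j hj1 (by omega) ⟨h2, h3⟩

lemma addedAt_cases {k : ℕ} {p : ℤ} (h : C.addedAt k p) :
    (k = 1 ∧ p = C.lo 1) ∨
    ∃ m, k = m + 1 ∧ 1 ≤ m ∧
      ((C.lo (m+1) = C.lo m - 1 ∧ C.hi (m+1) = C.hi m ∧ p = C.lo (m+1) ∧ (C.box (m+1)).1 = p) ∨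
       (C.lo (m+1) = C.lo m ∧ C.hi (m+1) = C.hi m + 1 ∧ p = C.hi (m+1) ∧ (C.box (m+1)).2 = p)) := by
  obtain ⟨hk1, hkl, hlo, hhi, hmin⟩ := h
  match k, hk1 with
  | 1, _ =>
    left
    have := C.size 1 (le_refl 1) hkl
    exact ⟨rfl, by omega⟩
  | (m+1+1), _ =>
    right
    refine ⟨m+1, rfl, by omega, ?_⟩
    have hnm := hmin (m+1) (by omega) (by omega)
    rcases C.step (m+1) (by omega) (by omega) with ⟨hl', hh'⟩ | ⟨hl', hh'⟩
    · left
      have hp : p = C.lo (m+1+1) := by omega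
      exact ⟨hl', hh', hp, by rw [hp]; exact C.KL_left (by omega) (by omega) hl'⟩
    · right
      have hp : p = C.hi (m+1+1) := by omega
      exact ⟨hl', hh', hp, by rw [hp]; exact C.KL_right (by omega) (by omega) hh'⟩

end AdmissibleChain

namespace AdmissibleChain

variable {I : Type*} {i : ℤ → I} {l : ℕ} (C : AdmissibleChain i l)

lemma diff_singleton {k : ℕ} {p : ℤ} (h : C.addedAt k p) :
    ({p} : Set ℤ) = env C k \ env C (k - 1) := by
  have hkl := h.2.1
  rcases C.addedAt_cases h with ⟨hk1, hp⟩ | ⟨m, hkm, hm1, hcase⟩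
  · subst hk1
    have hs := C.size 1 le_rfl hkl
    ext t
    simp only [env, show (1:ℕ) - 1 = 0 from rfl, if_pos rfl, if_neg one_ne_zero, if_true,
      Set.mem_singleton_iff, Set.mem_diff, Set.mem_Icc, Set.mem_empty_iff_false,
      not_false_iff, and_true]
    omega
  · subst hkm
    have hll : C.lo m ≤ C.hi m := C.lo_le_hi (by omega) (by omega)
    rcases hcase with ⟨hl', hh', hp, _⟩ | ⟨hl', hh', hp, _⟩ <;>
    · ext t
      simp only [env, Nat.add_sub_cancel, if_neg (Nat.succ_ne_zero m),
        if_neg (show m ≠ 0 by omega), Set.mem_singleton_iff, Set.mem_diff, Set.mem_Icc]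
      omega

lemma box_inj {j k : ℕ} (hj1 : 1 ≤ j) (hjl : j ≤ l) (hk1 : 1 ≤ k) (hkl : k ≤ l)
    (h : C.box j = C.box k) : j = k := by
  have aux : ∀ j k : ℕ, 1 ≤ j → j < k → k ≤ l → C.box j ≠ C.box k := by
    intro j k hj1 hjk hkl hne
    obtain ⟨m, rfl⟩ : ∃ m, k = m + 1 := ⟨k - 1, by omega⟩
    have hb1 : (C.box j).1 = (C.box (m+1)).1 := by rw [hne]
    have hb2 : (C.box j).2 = (C.box (m+1)).2 := by rw [hne]
    have hmono := C.mono hj1 (show j ≤ m by omega) (by omega)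
    have hbbj := C.box_bounds hj1 (by omega)
    rcases C.step m (by omega) (by omega) with ⟨hl', _⟩ | ⟨_, hh'⟩
    · have := C.KL_left (by omega) (by omega) hl'
      omega
    · have := C.KL_right (by omega) (by omega) hh'
      omega
  rcases Nat.lt_trichotomy j k with h' | h' | h'
  · exact absurd h (aux j k hj1 h' hkl)
  · exact h'
  · exact absurd h.symm (aux k j hk1 h' hjl)

lemma main_left {k₀ m₀ : ℕ} (hm₀ : 1 ≤ m₀) (hk₀ : k₀ = m₀ + 1) (hk₀l : k₀ ≤ l)
    {x y x' : ℤ} (hbox : C.box k₀ = (x, y)) (hL : C.lo k₀ = C.lo m₀ - 1)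
    (hlox : C.lo k₀ = x) (hx'y : x' ≤ y) (G : ∀ t, x < t → t < x' → i t ≠ i x')
    {k' : ℕ} (hadd : C.addedAt k' x') : (C.box k').1 = x' := by
  rcases C.addedAt_cases hadd with ⟨hk1, hp⟩ | ⟨m, hkm, hm1, hcase⟩
  · subst hk1
    have hb1 := C.box_one hadd.2.1
    omega
  · subst hkm
    rcases hcase with ⟨_, _, _, hb1⟩ | ⟨hlo', hhi', hp, hb2⟩
    · exact hb1
    · by_contra hne
      have hml : m + 1 ≤ l := hadd.2.1
      have hbb := C.box_bounds (show 1 ≤ m + 1 by omega) hml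
      have hcol : i (C.box (m+1)).1 = i x' := by
        have h4 := hbb.2.2.2
        rw [hb2] at h4
        exact h4
      rcases lt_or_ge x (C.box (m+1)).1 with hxu | hux
      · exact G _ hxu (by omega) hcol
      · rw [hk₀] at hL hlox hbox hk₀l
        rcases Nat.lt_trichotomy (m+1) (m₀+1) with hlt | heq | hgt
        · have hmono := C.mono (show 1 ≤ m + 1 by omega) (show m + 1 ≤ m₀ by omega)
            (by omega)
          have := hbb.1
          omega
        · have hm : m = m₀ := by omega
          rw [hm] at hlo'
          omega
        · have hmono := C.mono (show 1 ≤ m₀ + 1 by omega) (show m₀ + 1 ≤ m by omega)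
            (by omega)
          have hbk := C.box_bounds (show 1 ≤ m₀ + 1 by omega) hk₀l
          rw [hbox] at hbk
          omega

lemma least_left {k' : ℕ} {x' : ℤ} (hadd : C.addedAt k' x') (hb : (C.box k').1 = x')
    {j : ℕ} (hj1 : 1 ≤ j) (hjl : j ≤ l) (hbj : (C.box j).1 = x') :
    C.box j = C.box k' ∨ (C.box k').2 < (C.box j).2 := by
  have hbbj := C.box_bounds hj1 hjl
  have hk'j : k' ≤ j := C.addedAt_le hadd hj1 (by omega) (by omega)
  rcases Nat.eq_or_lt_of_le hk'j with he | hlt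
  · left; rw [← he]
  · obtain ⟨m, rfl⟩ : ∃ m, j = m + 1 := ⟨j - 1, by omega⟩
    have hk'1 := hadd.1
    have hmono := C.mono hk'1 (show k' ≤ m by omega) (by omega)
    rcases C.step m (by omega) (by omega) with ⟨hl', _⟩ | ⟨_, hh'⟩
    · exfalso
      have := C.KL_left (by omega) (by omega) hl'
      have := hadd.2.2.1
      omega
    · right
      have := C.KL_right (by omega) (by omega) hh'
      have hbbk := C.box_bounds hk'1 (by omega)
      omega

lemma eff_to_left {k₀ : ℕ} {x y : ℤ} (hk₀1 : 1 ≤ k₀) (hk₀l : k₀ ≤ l)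
    (hbox : C.box k₀ = (x, y)) (hxy : x < y)
    (heff : ({x} : Set ℤ) = env C k₀ \ env C (k₀ - 1)) :
    ∃ m₀, k₀ = m₀ + 1 ∧ 1 ≤ m₀ ∧ C.lo k₀ = C.lo m₀ - 1 ∧ C.lo k₀ = x := by
  have hx : x ∈ env C k₀ \ env C (k₀ - 1) := by
    rw [← heff]; exact Set.mem_singleton x
  match k₀, hk₀1 with
  | 1, _ =>
    exfalso
    have hb := C.box_one (by omega : 1 ≤ l)
    rw [hbox] at hb
    simp only at hb
    omega
  | (m+1+1), _ =>
    simp only [env, Nat.add_sub_cancel, if_neg (Nat.succ_ne_zero (m+1)),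
      if_neg (Nat.succ_ne_zero m), Set.mem_diff, Set.mem_Icc] at hx
    rcases C.step (m+1) (by omega) (by omega) with ⟨hl', hh'⟩ | ⟨hl', hh'⟩
    · exact ⟨m+1, rfl, by omega, hl', by omega⟩
    · exfalso
      have hkr := C.KL_right (by omega) (by omega) hh'
      rw [hbox] at hkr
      simp only at hkr
      omega

lemma main_right {k₀ m₀ : ℕ} (hm₀ : 1 ≤ m₀) (hk₀ : k₀ = m₀ + 1) (hk₀l : k₀ ≤ l)
    {x y y' : ℤ} (hbox : C.box k₀ = (x, y)) (hR : C.hi k₀ = C.hi m₀ + 1)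
    (hhiy : C.hi k₀ = y) (hxy' : x ≤ y') (G : ∀ t, y' < t → t < y → i t ≠ i y')
    {k' : ℕ} (hadd : C.addedAt k' y') : (C.box k').2 = y' := by
  rcases C.addedAt_cases hadd with ⟨hk1, hp⟩ | ⟨m, hkm, hm1, hcase⟩
  · subst hk1
    have hb1 := C.box_one hadd.2.1
    omega
  · subst hkm
    rcases hcase with ⟨hlo', hhi', hp, hb1⟩ | ⟨_, _, _, hb2⟩
    · by_contra hne
      have hml : m + 1 ≤ l := hadd.2.1
      have hbb := C.box_bounds (show 1 ≤ m + 1 by omega) hml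
      have hcol : i (C.box (m+1)).2 = i y' := by
        have h4 := hbb.2.2.2
        rw [hb1] at h4
        exact h4.symm
      rcases lt_or_ge (C.box (m+1)).2 y with hvy | hyv
      · exact G _ (by omega) hvy hcol
      · rw [hk₀] at hR hhiy hbox hk₀l
        rcases Nat.lt_trichotomy (m+1) (m₀+1) with hlt | heq | hgt
        · have hmono := C.mono (show 1 ≤ m + 1 by omega) (show m + 1 ≤ m₀ by omega)
            (by omega)
          have := hbb.2.2.1
          omega
        · have hm : m = m₀ := by omega
          rw [hm] at hhi'
          omega
        · have hmono := C.mono (show 1 ≤ m₀ + 1 by omega) (show m₀ + 1 ≤ m by omega)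
            (by omega)
          have hbk := C.box_bounds (show 1 ≤ m₀ + 1 by omega) hk₀l
          rw [hbox] at hbk
          omega
    · exact hb2

lemma greatest_right {k' : ℕ} {y' : ℤ} (hadd : C.addedAt k' y') (hb : (C.box k').2 = y')
    {j : ℕ} (hj1 : 1 ≤ j) (hjl : j ≤ l) (hbj : (C.box j).2 = y') :
    C.box j = C.box k' ∨ (C.box j).1 < (C.box k').1 := by
  have hbbj := C.box_bounds hj1 hjl
  have hk'j : k' ≤ j := C.addedAt_le hadd hj1 (by omega) (by omega)
  rcases Nat.eq_or_lt_of_le hk'j with he | hlt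
  · left; rw [← he]
  · obtain ⟨m, rfl⟩ : ∃ m, j = m + 1 := ⟨j - 1, by omega⟩
    have hk'1 := hadd.1
    have hmono := C.mono hk'1 (show k' ≤ m by omega) (by omega)
    rcases C.step m (by omega) (by omega) with ⟨hl', _⟩ | ⟨_, hh'⟩
    · right
      have := C.KL_left (by omega) (by omega) hl'
      have hbbk := C.box_bounds hk'1 (by omega)
      omega
    · exfalso
      have := C.KL_right (by omega) (by omega) hh'
      have := hadd.2.2.2.1
      omega

lemma eff_to_right {k₀ : ℕ} {x y : ℤ} (hk₀1 : 1 ≤ k₀) (hk₀l : k₀ ≤ l)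
    (hbox : C.box k₀ = (x, y)) (hxy : x < y)
    (heff : ({y} : Set ℤ) = env C k₀ \ env C (k₀ - 1)) :
    ∃ m₀, k₀ = m₀ + 1 ∧ 1 ≤ m₀ ∧ C.hi k₀ = C.hi m₀ + 1 ∧ C.hi k₀ = y := by
  have hy : y ∈ env C k₀ \ env C (k₀ - 1) := by
    rw [← heff]; exact Set.mem_singleton y
  match k₀, hk₀1 with
  | 1, _ =>
    exfalso
    have hb := C.box_one (by omega : 1 ≤ l)
    rw [hbox] at hb
    simp only at hb
    omega
  | (m+1+1), _ =>
    simp only [env, Nat.add_sub_cancel, if_neg (Nat.succ_ne_zero (m+1)),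
      if_neg (Nat.succ_ne_zero m), Set.mem_diff, Set.mem_Icc] at hy
    rcases C.step (m+1) (by omega) (by omega) with ⟨hl', hh'⟩ | ⟨hl', hh'⟩
    · exfalso
      have hkl' := C.KL_left (by omega) (by omega) hl'
      rw [hbox] at hkl'
      simp only at hkl'
      omega
    · exact ⟨m+1, rfl, by omega, hh', by omega⟩

end AdmissibleChain

variable {i : ℤ → I}

lemma boxCommute_symm_s15 {x1 y1 x2 y2 : ℤ} (h : BoxCommute i x1 y1 x2 y2) :
    BoxCommute i x2 y2 x1 y1 := by
  rcases h with h | h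
  · exact Or.inr h
  · exact Or.inl h

lemma lfull {a b m : ℤ} (ham : a ≤ m) (hmb : m ≤ b) (hcol : i m = i a)
    (hgap : ∀ t, m < t → t ≤ b → i t ≠ i a) {u v : ℤ} (hau : a ≤ u) (hvb : v ≤ b) :
    BoxCommute i a m u v := by
  left
  constructor
  · intro t ht1 ht2
    exact absurd ht2 (not_lt.2 (hau.trans ht1))
  · intro t ht1 ht2
    rw [hcol]
    exact hgap t ht1 (ht2.trans hvb)

lemma rfull {a b m' : ℤ} (ham' : a ≤ m') (hm'b : m' ≤ b) (hcol : i m' = i b)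
    (hgap : ∀ t, a ≤ t → t < m' → i t ≠ i b) {u v : ℤ} (hau : a ≤ u) (hvb : v ≤ b) :
    BoxCommute i m' b u v := by
  left
  constructor
  · intro t ht1 ht2
    rw [hcol]
    exact hgap t (hau.trans ht1) ht2
  · intro t ht1 ht2
    exact absurd ht1 (not_lt.2 (ht2.trans hvb))

lemma mem_max_of_commutes {a b : ℤ} {F : Set (ℤ × ℤ)} (hF : MaxCommFamily i a b F)
    {p : ℤ × ℤ} (hbox : IsBox i p.1 p.2) (hr : a ≤ p.1 ∧ p.2 ≤ b)
    (hcomm : ∀ q : ℤ × ℤ, a ≤ q.1 → q.2 ≤ b → BoxCommute i p.1 p.2 q.1 q.2) :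
    p ∈ F := by
  have hG : CommFamily i (insert p F) := by
    constructor
    · intro q hq
      rcases Set.mem_insert_iff.1 hq with rfl | hq'
      · exact hbox
      · exact hF.1.1 q hq'
    · intro q hq r hr'
      rcases Set.mem_insert_iff.1 hq with heq | hq' <;>
        rcases Set.mem_insert_iff.1 hr' with heq2 | hr''
      · rw [heq, heq2]; exact hcomm p hr.1 hr.2
      · rw [heq]; exact hcomm r (hF.2.1 r hr'').1 (hF.2.1 r hr'').2
      · rw [heq2]; exact boxCommute_symm_s15 (hcomm q (hF.2.1 q hq').1 (hF.2.1 q hq').2)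
      · exact hF.1.2 q hq' r hr''
  have hrange : InRange a b (insert p F) := by
    intro q hq
    rcases Set.mem_insert_iff.1 hq with rfl | hq'
    · exact hr
    · exact hF.2.1 q hq'
  have := hF.2.2 _ hG hrange (Set.subset_insert p F)
  rw [this]; exact Set.mem_insert p F

theorem exists_chain : ∀ (n : ℕ) (a b : ℤ), b = a + n → ∀ F : Set (ℤ × ℤ),
    MaxCommFamily i a b F →
    ∃ C : AdmissibleChain i (n+1), C.lo (n+1) = a ∧ C.hi (n+1) = b ∧ boxesOf C = F := by
  intro n
  induction n with
  | zero =>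
    intro a b hb F hF
    have hba : b = a := by omega
    subst hba
    have hFeq : F = {(b, b)} := by
      apply hF.2.2
      · constructor
        · intro p hp
          rw [Set.mem_singleton_iff] at hp
          subst hp
          exact ⟨le_rfl, rfl⟩
        · intro p hp q hq
          rw [Set.mem_singleton_iff] at hp hq
          subst hp; subst hq
          exact Or.inl ⟨fun t h1 h2 => absurd (h1.trans_lt h2) (lt_irrefl b),
            fun t h1 h2 => absurd (h1.trans_le h2) (lt_irrefl b)⟩
      · intro p hp
        rw [Set.mem_singleton_iff] at hp
        subst hp
        exact ⟨le_rfl, le_rfl⟩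
      · intro p hp
        have h1 := hF.2.1 p hp
        have h2 := (hF.1.1 p hp).1
        obtain ⟨p1, p2⟩ := p
        simp only [Set.mem_singleton_iff, Prod.mk.injEq]
        simp only at h1 h2
        omega
    refine ⟨⟨fun _ => b, fun _ => b, fun _ => (b, b), ?_, ?_, ?_, ?_⟩, rfl, rfl, ?_⟩
    · intro k hk1 hk2
      have : k = 1 := by omega
      subst this
      push_cast
      ring
    · intro k hk1 hk2
      exact absurd hk2 (by omega)
    · intro k _ _
      exact Or.inl ⟨rfl, le_rfl, le_rfl, rfl,
        fun t h1 h2 => absurd (h1.trans_le h2) (lt_irrefl b)⟩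
    · intro k hk1 hk2
      have hk : k = 1 := by omega
      subst hk
      ext t
      simp only [Set.mem_Icc, Set.mem_iUnion, exists_prop]
      constructor
      · intro h
        exact ⟨1, ⟨le_rfl, le_rfl⟩, h⟩
      · rintro ⟨j, _, h⟩
        exact h
    · rw [hFeq]
      ext p
      simp only [boxesOf, Set.mem_setOf_eq, Set.mem_singleton_iff]
      constructor
      · rintro ⟨k, _, _, hk⟩
        exact hk.symm
      · intro h
        exact ⟨1, le_rfl, le_rfl, h.symm⟩
  | succ n ih =>
    intro a b hb F hF
    have hab : a + 1 ≤ b := by omega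
    obtain ⟨m, hm⟩ := Int.exists_greatest_of_bdd
      (P := fun t => a ≤ t ∧ t ≤ b ∧ i t = i a)
      ⟨b, fun z hz => hz.2.1⟩ ⟨a, le_rfl, by omega, rfl⟩
    obtain ⟨ham, hmb, hcolm⟩ := hm.1
    have hgapm : ∀ t, m < t → t ≤ b → i t ≠ i a := fun t h1 h2 h3 =>
      absurd (hm.2 t ⟨by omega, h2, h3⟩) (by omega)
    obtain ⟨m', hm'⟩ := Int.exists_least_of_bdd
      (P := fun t => a ≤ t ∧ t ≤ b ∧ i t = i b)
      ⟨a, fun z hz => hz.1⟩ ⟨b, by omega, le_rfl, rfl⟩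
    obtain ⟨ham', hm'b, hcolm'⟩ := hm'.1
    have hgapm' : ∀ t, a ≤ t → t < m' → i t ≠ i b := fun t h1 h2 h3 =>
      absurd (hm'.2 t ⟨h1, by omega, h3⟩) (by omega)
    have hLmem : (a, m) ∈ F := mem_max_of_commutes hF ⟨ham, hcolm.symm⟩ ⟨le_rfl, hmb⟩
      (fun q h1 h2 => lfull ham hmb hcolm hgapm h1 h2)
    have hRmem : (m', b) ∈ F := mem_max_of_commutes hF ⟨hm'b, hcolm'⟩ ⟨ham', le_rfl⟩
      (fun q h1 h2 => rfull ham' hm'b hcolm' hgapm' h1 h2)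
    by_cases hcase : ∃ v, v < m ∧ (a, v) ∈ F
    · -- remove the R-box (m', b), right extension
      obtain ⟨v, hvm, hvF⟩ := hcase
      have huniq : ∀ u, (u, b) ∈ F → u = m' := by
        intro u huF
        have hu1 : m' ≤ u := by
          by_contra hc
          exact hgapm' u (hF.2.1 _ huF).1 (by omega) (hF.1.1 _ huF).2
        rcases eq_or_lt_of_le hu1 with he | hlt
        · exact he.symm
        · exfalso
          have hcolv : i v = i a := (hF.1.1 _ hvF).2.symm
          have hcolu : i u = i b := (hF.1.1 _ huF).2
          rcases hF.1.2 (a, v) hvF (u, b) huF with ⟨h1, h2⟩ | ⟨h1, h2⟩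
          · exact h2 m hvm hmb (hcolm.trans hcolv.symm)
          · exact h1 m' ham' hlt (hcolm'.trans hcolu.symm)
      have hnotin : ∀ p : ℤ × ℤ, p ∈ F \ {(m', b)} → p.2 ≤ b - 1 := by
        intro p hp
        have h2 := (hF.2.1 p hp.1).2
        rcases eq_or_lt_of_le h2 with he | hlt
        · exfalso
          have hmem : (p.1, b) ∈ F := by rw [← he]; exact hp.1
          have heq := huniq p.1 hmem
          apply hp.2
          simp only [Set.mem_singleton_iff, Prod.ext_iff]
          exact ⟨heq, he⟩
        · omega
      have hF'max : MaxCommFamily i a (b-1) (F \ {(m', b)}) := by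
        refine ⟨⟨fun p hp => hF.1.1 p hp.1, fun p hp q hq => hF.1.2 p hp.1 q hq.1⟩,
          fun p hp => ⟨(hF.2.1 p hp.1).1, hnotin p hp⟩, ?_⟩
        intro G hGc hGr hsub
        have hbG : (m', b) ∉ G := fun h => absurd ((hGr _ h).2) (by omega)
        have hFeq : F = insert (m', b) G := by
          apply hF.2.2
          · constructor
            · intro p hp
              rcases Set.mem_insert_iff.1 hp with rfl | hp'
              · exact ⟨hm'b, hcolm'⟩
              · exact hGc.1 p hp'
            · intro p hp q hq
              rcases Set.mem_insert_iff.1 hp with rfl | hp' <;>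
                rcases Set.mem_insert_iff.1 hq with rfl | hq'
              · exact rfull ham' hm'b hcolm' hgapm' ham' le_rfl
              · exact rfull ham' hm'b hcolm' hgapm' (hGr q hq').1
                  ((hGr q hq').2.trans (by omega))
              · exact boxCommute_symm_s15 (rfull ham' hm'b hcolm' hgapm' (hGr p hp').1
                  ((hGr p hp').2.trans (by omega)))
              · exact hGc.2 p hp' q hq'
          · intro p hp
            rcases Set.mem_insert_iff.1 hp with rfl | hp'
            · exact ⟨ham', le_rfl⟩
            · exact ⟨(hGr p hp').1, (hGr p hp').2.trans (by omega)⟩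
          · intro p hp
            by_cases hpm : p = (m', b)
            · rw [hpm]; exact Set.mem_insert _ _
            · exact Set.mem_insert_of_mem _ (hsub ⟨hp, hpm⟩)
        apply Set.Subset.antisymm hsub
        intro q hq
        refine ⟨hFeq ▸ Set.mem_insert_of_mem _ hq, fun he => ?_⟩
        exact hbG (Set.mem_singleton_iff.1 he ▸ hq)
      obtain ⟨C', hlo', hhi', hbox'⟩ := ih a (b-1) (by omega) _ hF'max
      refine ⟨⟨fun k => if k = n+1+1 then a else C'.lo k,
               fun k => if k = n+1+1 then b else C'.hi k,
               fun k => if k = n+1+1 then (m', b) else C'.box k, ?_, ?_, ?_, ?_⟩,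
              by dsimp only; rw [if_pos rfl], by dsimp only; rw [if_pos rfl], ?_⟩
      · intro k hk1 hk2
        by_cases hk : k = n+1+1
        · rw [if_pos hk, if_pos hk, hk]
          push_cast
          omega
        · rw [if_neg hk, if_neg hk]
          exact C'.size k hk1 (by omega)
      · intro k hk1 hk2
        by_cases hk : k + 1 = n+1+1
        · have hkn : k = n+1 := by omega
          subst hkn
          refine Or.inr ⟨?_, ?_⟩
          · rw [if_pos rfl, if_neg (by omega)]
            exact hlo'.symm
          · rw [if_pos rfl, if_neg (by omega), hhi']
            omega
        · simp only [if_neg hk, if_neg (show k ≠ n+1+1 by omega)]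
          exact C'.step k hk1 (by omega)
      · intro k hk1 hk2
        by_cases hk : k = n+1+1
        · subst hk
          simp only [if_pos rfl]
          exact Or.inr ⟨rfl, ham', hm'b, hcolm', hgapm'⟩
        · simp only [if_neg hk]
          exact C'.box_spec k hk1 (by omega)
      · intro k hk1 hk2
        by_cases hk : k = n+1+1
        · subst hk
          rw [if_pos rfl, if_pos rfl]
          ext t
          simp only [Set.mem_Icc, Set.mem_iUnion, exists_prop]
          constructor
          · rintro ⟨hat, htb⟩
            by_cases htb' : t ≤ b - 1
            · have hcov := C'.cover (n+1) (by omega) le_rfl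
              have hmem : t ∈ Set.Icc (C'.lo (n+1)) (C'.hi (n+1)) := by
                rw [hlo', hhi']; exact ⟨hat, htb'⟩
              rw [hcov] at hmem
              simp only [Set.mem_iUnion, Set.mem_Icc, exists_prop] at hmem
              obtain ⟨j, ⟨hj1, hj2⟩, hjt⟩ := hmem
              refine ⟨j, ⟨hj1, by omega⟩, ?_⟩
              rw [if_neg (by omega)]
              exact hjt
            · refine ⟨n+1+1, ⟨by omega, le_rfl⟩, ?_⟩
              rw [if_pos rfl]
              exact ⟨by omega, htb⟩
          · rintro ⟨j, ⟨hj1, hj2⟩, hjt⟩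
            by_cases hj : j = n+1+1
            · rw [if_pos hj] at hjt
              exact ⟨ham'.trans hjt.1, hjt.2⟩
            · rw [if_neg hj] at hjt
              have hcov := C'.cover (n+1) (by omega) le_rfl
              have hmem : t ∈ Set.Icc (C'.lo (n+1)) (C'.hi (n+1)) := by
                rw [hcov]
                simp only [Set.mem_iUnion, Set.mem_Icc, exists_prop]
                exact ⟨j, ⟨hj1, by omega⟩, hjt⟩
              rw [hlo', hhi', Set.mem_Icc] at hmem
              exact ⟨hmem.1, by omega⟩
        · simp only [if_neg hk]
          rw [C'.cover k hk1 (by omega)]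
          ext t
          simp only [Set.mem_iUnion, Set.mem_Icc, exists_prop]
          constructor
          · rintro ⟨j, ⟨hj1, hj2⟩, hjt⟩
            refine ⟨j, ⟨hj1, hj2⟩, ?_⟩
            rw [if_neg (by omega)]
            exact hjt
          · rintro ⟨j, ⟨hj1, hj2⟩, hjt⟩
            rw [if_neg (by omega)] at hjt
            exact ⟨j, ⟨hj1, hj2⟩, hjt⟩
      · ext p
        simp only [boxesOf, Set.mem_setOf_eq]
        constructor
        · rintro ⟨k, hk1, hk2, hkp⟩
          by_cases hk : k = n+1+1
          · rw [if_pos hk] at hkp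
            rw [← hkp]; exact hRmem
          · rw [if_neg hk] at hkp
            have hmem : p ∈ F \ {(m', b)} := by
              rw [← hbox']; exact ⟨k, hk1, by omega, hkp⟩
            exact hmem.1
        · intro hp
          by_cases hpm : p = (m', b)
          · exact ⟨n+1+1, by omega, le_rfl, by rw [if_pos rfl, hpm]⟩
          · have hmem : p ∈ F \ {(m', b)} := ⟨hp, hpm⟩
            rw [← hbox'] at hmem
            obtain ⟨k, hk1, hk2, hkp⟩ := hmem
            exact ⟨k, hk1, by omega, by rw [if_neg (by omega)]; exact hkp⟩
    · -- remove the L-box (a, m), left extension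
      have huniq : ∀ v, (a, v) ∈ F → v = m := by
        intro v hvF
        have hv1 : v ≤ m := hm.2 v ⟨(hF.1.1 _ hvF).1, (hF.2.1 _ hvF).2, (hF.1.1 _ hvF).2.symm⟩
        rcases eq_or_lt_of_le hv1 with he | hlt
        · exact he
        · exact absurd ⟨v, hlt, hvF⟩ hcase
      have hnotin : ∀ p : ℤ × ℤ, p ∈ F \ {(a, m)} → a + 1 ≤ p.1 := by
        intro p hp
        have h1 := (hF.2.1 p hp.1).1
        rcases eq_or_lt_of_le h1 with he | hlt
        · exfalso
          have hmem : (a, p.2) ∈ F := by rw [he]; exact hp.1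
          have heq := huniq p.2 hmem
          apply hp.2
          simp only [Set.mem_singleton_iff, Prod.ext_iff]
          exact ⟨he.symm, heq⟩
        · omega
      have hF'max : MaxCommFamily i (a+1) b (F \ {(a, m)}) := by
        refine ⟨⟨fun p hp => hF.1.1 p hp.1, fun p hp q hq => hF.1.2 p hp.1 q hq.1⟩,
          fun p hp => ⟨hnotin p hp, (hF.2.1 p hp.1).2⟩, ?_⟩
        intro G hGc hGr hsub
        have hbG : (a, m) ∉ G := fun h => absurd ((hGr _ h).1) (by omega)
        have hFeq : F = insert (a, m) G := by
          apply hF.2.2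
          · constructor
            · intro p hp
              rcases Set.mem_insert_iff.1 hp with rfl | hp'
              · exact ⟨ham, hcolm.symm⟩
              · exact hGc.1 p hp'
            · intro p hp q hq
              rcases Set.mem_insert_iff.1 hp with rfl | hp' <;>
                rcases Set.mem_insert_iff.1 hq with rfl | hq'
              · exact lfull ham hmb hcolm hgapm le_rfl hmb
              · exact lfull ham hmb hcolm hgapm ((by omega : a ≤ a+1).trans (hGr q hq').1)
                  (hGr q hq').2
              · exact boxCommute_symm_s15 (lfull ham hmb hcolm hgapm
                  ((by omega : a ≤ a+1).trans (hGr p hp').1) (hGr p hp').2)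
              · exact hGc.2 p hp' q hq'
          · intro p hp
            rcases Set.mem_insert_iff.1 hp with rfl | hp'
            · exact ⟨le_rfl, hmb⟩
            · exact ⟨(by omega : a ≤ a+1).trans (hGr p hp').1, (hGr p hp').2⟩
          · intro p hp
            by_cases hpm : p = (a, m)
            · rw [hpm]; exact Set.mem_insert _ _
            · exact Set.mem_insert_of_mem _ (hsub ⟨hp, hpm⟩)
        apply Set.Subset.antisymm hsub
        intro q hq
        refine ⟨hFeq ▸ Set.mem_insert_of_mem _ hq, fun he => ?_⟩
        exact hbG (Set.mem_singleton_iff.1 he ▸ hq)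
      obtain ⟨C', hlo', hhi', hbox'⟩ := ih (a+1) b (by omega) _ hF'max
      refine ⟨⟨fun k => if k = n+1+1 then a else C'.lo k,
               fun k => if k = n+1+1 then b else C'.hi k,
               fun k => if k = n+1+1 then (a, m) else C'.box k, ?_, ?_, ?_, ?_⟩,
              by dsimp only; rw [if_pos rfl], by dsimp only; rw [if_pos rfl], ?_⟩
      · intro k hk1 hk2
        by_cases hk : k = n+1+1
        · rw [if_pos hk, if_pos hk, hk]
          push_cast
          omega
        · rw [if_neg hk, if_neg hk]
          exact C'.size k hk1 (by omega)
      · intro k hk1 hk2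
        by_cases hk : k + 1 = n+1+1
        · have hkn : k = n+1 := by omega
          subst hkn
          refine Or.inl ⟨?_, ?_⟩
          · rw [if_pos rfl, if_neg (by omega), hlo']
            omega
          · rw [if_pos rfl, if_neg (by omega)]
            exact hhi'.symm
        · simp only [if_neg hk, if_neg (show k ≠ n+1+1 by omega)]
          exact C'.step k hk1 (by omega)
      · intro k hk1 hk2
        by_cases hk : k = n+1+1
        · subst hk
          simp only [if_pos rfl]
          exact Or.inl ⟨rfl, ham, hmb, hcolm, hgapm⟩
        · simp only [if_neg hk]
          exact C'.box_spec k hk1 (by omega)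
      · intro k hk1 hk2
        by_cases hk : k = n+1+1
        · subst hk
          rw [if_pos rfl, if_pos rfl]
          ext t
          simp only [Set.mem_Icc, Set.mem_iUnion, exists_prop]
          constructor
          · rintro ⟨hat, htb⟩
            by_cases hat' : a + 1 ≤ t
            · have hcov := C'.cover (n+1) (by omega) le_rfl
              have hmem : t ∈ Set.Icc (C'.lo (n+1)) (C'.hi (n+1)) := by
                rw [hlo', hhi']; exact ⟨hat', htb⟩
              rw [hcov] at hmem
              simp only [Set.mem_iUnion, Set.mem_Icc, exists_prop] at hmem
              obtain ⟨j, ⟨hj1, hj2⟩, hjt⟩ := hmem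
              refine ⟨j, ⟨hj1, by omega⟩, ?_⟩
              rw [if_neg (by omega)]
              exact hjt
            · refine ⟨n+1+1, ⟨by omega, le_rfl⟩, ?_⟩
              rw [if_pos rfl]
              exact ⟨hat, by omega⟩
          · rintro ⟨j, ⟨hj1, hj2⟩, hjt⟩
            by_cases hj : j = n+1+1
            · rw [if_pos hj] at hjt
              exact ⟨hjt.1, hjt.2.trans hmb⟩
            · rw [if_neg hj] at hjt
              have hcov := C'.cover (n+1) (by omega) le_rfl
              have hmem : t ∈ Set.Icc (C'.lo (n+1)) (C'.hi (n+1)) := by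
                rw [hcov]
                simp only [Set.mem_iUnion, Set.mem_Icc, exists_prop]
                exact ⟨j, ⟨hj1, by omega⟩, hjt⟩
              rw [hlo', hhi', Set.mem_Icc] at hmem
              exact ⟨by omega, hmem.2⟩
        · simp only [if_neg hk]
          rw [C'.cover k hk1 (by omega)]
          ext t
          simp only [Set.mem_iUnion, Set.mem_Icc, exists_prop]
          constructor
          · rintro ⟨j, ⟨hj1, hj2⟩, hjt⟩
            refine ⟨j, ⟨hj1, hj2⟩, ?_⟩
            rw [if_neg (by omega)]
            exact hjt
          · rintro ⟨j, ⟨hj1, hj2⟩, hjt⟩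
            rw [if_neg (by omega)] at hjt
            exact ⟨j, ⟨hj1, hj2⟩, hjt⟩
      · ext p
        simp only [boxesOf, Set.mem_setOf_eq]
        constructor
        · rintro ⟨k, hk1, hk2, hkp⟩
          by_cases hk : k = n+1+1
          · rw [if_pos hk] at hkp
            rw [← hkp]; exact hLmem
          · rw [if_neg hk] at hkp
            have hmem : p ∈ F \ {(a, m)} := by
              rw [← hbox']; exact ⟨k, hk1, by omega, hkp⟩
            exact hmem.1
        · intro hp
          by_cases hpm : p = (a, m)
          · exact ⟨n+1+1, by omega, le_rfl, by rw [if_pos rfl, hpm]⟩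
          · have hmem : p ∈ F \ {(a, m)} := ⟨hp, hpm⟩
            rw [← hbox'] at hmem
            obtain ⟨k, hk1, hk2, hkp⟩ := hmem
            exact ⟨k, hk1, by omega, by rw [if_neg (by omega)]; exact hkp⟩

lemma key_left {a b : ℤ} {F : Set (ℤ × ℤ)} (hF : MaxCommFamily i a b F)
    {l : ℕ} (C : AdmissibleChain i l) (hl1 : 1 ≤ l) (hloa : C.lo l = a) (hhib : C.hi l = b)
    (hbF : boxesOf C = F) {x y x' : ℤ} (hxyF : (x, y) ∈ F) (hxy : x < y)
    (hax' : a ≤ x') (hx'y : x' ≤ y) (G : ∀ t, x < t → t < x' → i t ≠ i x')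
    (Hsing : ∀ k : ℕ, 1 ≤ k → k ≤ l → C.box k = (x, y) →
      ({x} : Set ℤ) = env C k \ env C (k - 1)) :
    ∃ k', C.addedAt k' x' ∧ (C.box k').1 = x' := by
  have hxyB : (x, y) ∈ boxesOf C := by rw [hbF]; exact hxyF
  obtain ⟨k₀, hk₀1, hk₀l, hbox₀⟩ := hxyB
  have hsing := Hsing k₀ hk₀1 hk₀l hbox₀
  obtain ⟨m₀, hk₀m, hm₀1, hL, hlox⟩ := C.eff_to_left hk₀1 hk₀l hbox₀ hxy hsing
  have hyb : y ≤ b := (hF.2.1 _ hxyF).2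
  obtain ⟨k', hk'⟩ := C.addedAt_exists hl1 (p := x') (by rw [hloa]; exact hax')
    (by rw [hhib]; omega)
  exact ⟨k', hk', C.main_left hm₀1 hk₀m hk₀l hbox₀ hL hlox hx'y G hk'⟩

lemma key_right {a b : ℤ} {F : Set (ℤ × ℤ)} (hF : MaxCommFamily i a b F)
    {l : ℕ} (C : AdmissibleChain i l) (hl1 : 1 ≤ l) (hloa : C.lo l = a) (hhib : C.hi l = b)
    (hbF : boxesOf C = F) {x y y' : ℤ} (hxyF : (x, y) ∈ F) (hxy : x < y)
    (hxy' : x ≤ y') (hy'b : y' ≤ b) (G : ∀ t, y' < t → t < y → i t ≠ i y')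
    (Hsing : ∀ k : ℕ, 1 ≤ k → k ≤ l → C.box k = (x, y) →
      ({y} : Set ℤ) = env C k \ env C (k - 1)) :
    ∃ k', C.addedAt k' y' ∧ (C.box k').2 = y' := by
  have hxyB : (x, y) ∈ boxesOf C := by rw [hbF]; exact hxyF
  obtain ⟨k₀, hk₀1, hk₀l, hbox₀⟩ := hxyB
  have hsing := Hsing k₀ hk₀1 hk₀l hbox₀
  obtain ⟨m₀, hk₀m, hm₀1, hR, hhiy⟩ := C.eff_to_right hk₀1 hk₀l hbox₀ hxy hsing
  have hax : a ≤ x := (hF.2.1 _ hxyF).1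
  obtain ⟨k', hk'⟩ := C.addedAt_exists hl1 (p := y') (by rw [hloa]; omega)
    (by rw [hhib]; exact hy'b)
  exact ⟨k', hk', C.main_right hm₀1 hk₀m hk₀l hbox₀ hR hhiy hxy' G hk'⟩

theorem exists_box_with_effectiveEnd' (i : ℤ → I) (a b : ℤ) (hab : a ≤ b)
    (F : Set (ℤ × ℤ)) (hF : MaxCommFamily i a b F) (x y : ℤ) (hxy : (x, y) ∈ F) :
    (IsEffectiveEnd i a b F x y x → ∀ x' : ℤ, a ≤ x' → x' ≤ y → x < y →
      (∀ t : ℤ, x < t → t < x' → i t ≠ i x') →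
      ∃ y' : ℤ, x' ≤ y' ∧ (x', y') ∈ F ∧ IsEffectiveEnd i a b F x' y' x') ∧
    (IsEffectiveEnd i a b F x y y → ∀ y' : ℤ, x ≤ y' → y' ≤ b → x < y →
      (∀ t : ℤ, y' < t → t < y → i t ≠ i y') →
      ∃ x' : ℤ, x' ≤ y' ∧ (x', y') ∈ F ∧ IsEffectiveEnd i a b F x' y' y') := by
  obtain ⟨C₀, hlo₀, hhi₀, hbF₀⟩ := exists_chain (b - a).toNat a b (by omega) F hF
  have hl₀ : 1 ≤ (b - a).toNat + 1 := by omega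
  constructor
  · intro Heff x' hax' hx'y hxlty G
    obtain ⟨k₀', hadd₀, hb₀⟩ := key_left hF C₀ hl₀ hlo₀ hhi₀ hbF₀ hxy hxlty hax' hx'y G
      (Heff.2 _ C₀ hlo₀ hhi₀ hbF₀)
    have hbb₀ := C₀.box_bounds hadd₀.1 hadd₀.2.1
    refine ⟨(C₀.box k₀').2, by omega, ?_, ?_⟩
    · rw [← hbF₀]
      exact ⟨k₀', hadd₀.1, hadd₀.2.1, by rw [← hb₀]⟩
    · constructor
      · exact Set.mem_insert _ _
      · intro l' C' hlo' hhi' hbF' k hk1 hkl hbox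
        have hl1' : 1 ≤ l' := le_trans hk1 hkl
        obtain ⟨k'', hadd'', hb''⟩ := key_left hF C' hl1' hlo' hhi' hbF' hxy hxlty hax'
          hx'y G (Heff.2 _ C' hlo' hhi' hbF')
        rcases C'.least_left hadd'' hb'' hk1 hkl (by rw [hbox]) with h | h
        · have hkk : k = k'' := C'.box_inj hk1 hkl hadd''.1 hadd''.2.1 h
          subst hkk
          exact C'.diff_singleton hadd''
        · exfalso
          have hmemF : C'.box k'' ∈ F := by
            rw [← hbF']
            exact ⟨k'', hadd''.1, hadd''.2.1, rfl⟩
          rw [← hbF₀] at hmemF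
          obtain ⟨j₀, hj₀1, hj₀l, hj₀⟩ := hmemF
          have hbox2 : (C'.box k).2 = (C₀.box k₀').2 := by rw [hbox]
          rcases C₀.least_left hadd₀ hb₀ hj₀1 hj₀l (by rw [hj₀]; exact hb'') with h2 | h2
          · have h3 := congrArg Prod.snd (hj₀.symm.trans h2)
            omega
          · have h3 := congrArg Prod.snd hj₀
            omega
  · intro Heff y' hxy' hy'b hxlty G
    obtain ⟨k₀', hadd₀, hb₀⟩ := key_right hF C₀ hl₀ hlo₀ hhi₀ hbF₀ hxy hxlty hxy' hy'b G
      (Heff.2 _ C₀ hlo₀ hhi₀ hbF₀)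
    have hbb₀ := C₀.box_bounds hadd₀.1 hadd₀.2.1
    refine ⟨(C₀.box k₀').1, by omega, ?_, ?_⟩
    · rw [← hbF₀]
      exact ⟨k₀', hadd₀.1, hadd₀.2.1, by rw [← hb₀]⟩
    · constructor
      · exact Set.mem_insert_of_mem _ rfl
      · intro l' C' hlo' hhi' hbF' k hk1 hkl hbox
        have hl1' : 1 ≤ l' := le_trans hk1 hkl
        obtain ⟨k'', hadd'', hb''⟩ := key_right hF C' hl1' hlo' hhi' hbF' hxy hxlty hxy'
          hy'b G (Heff.2 _ C' hlo' hhi' hbF')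
        rcases C'.greatest_right hadd'' hb'' hk1 hkl (by rw [hbox]) with h | h
        · have hkk : k = k'' := C'.box_inj hk1 hkl hadd''.1 hadd''.2.1 h
          subst hkk
          exact C'.diff_singleton hadd''
        · exfalso
          have hmemF : C'.box k'' ∈ F := by
            rw [← hbF']
            exact ⟨k'', hadd''.1, hadd''.2.1, rfl⟩
          rw [← hbF₀] at hmemF
          obtain ⟨j₀, hj₀1, hj₀l, hj₀⟩ := hmemF
          have hbox1 : (C'.box k).1 = (C₀.box k₀').1 := by rw [hbox]
          rcases C₀.greatest_right hadd₀ hb₀ hj₀1 hj₀l (by rw [hj₀]; exact hb'') with h2 | h2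
          · have h3 := congrArg Prod.fst (hj₀.symm.trans h2)
            omega
          · have h3 := congrArg Prod.fst hj₀
            omega
/-- Existence of boxes of `F` with a prescribed effective end. -/
theorem exists_box_with_effectiveEnd (i : ℤ → I) (a b : ℤ) (hab : a ≤ b)
    (F : Set (ℤ × ℤ)) (hF : MaxCommFamily i a b F) (x y : ℤ) (hxy : (x, y) ∈ F) :
    (IsEffectiveEnd i a b F x y x → ∀ x' : ℤ, a ≤ x' → x' ≤ y → x < y →
      (∀ t : ℤ, x < t → t < x' → i t ≠ i x') →
      ∃ y' : ℤ, x' ≤ y' ∧ (x', y') ∈ F ∧ IsEffectiveEnd i a b F x' y' x') ∧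
    (IsEffectiveEnd i a b F x y y → ∀ y' : ℤ, x ≤ y' → y' ≤ b → x < y →
      (∀ t : ℤ, y' < t → t < y → i t ≠ i y') →
      ∃ x' : ℤ, x' ≤ y' ∧ (x', y') ∈ F ∧ IsEffectiveEnd i a b F x' y' y') := by
  exact exists_box_with_effectiveEnd' i a b hab F hF x y hxy

end IBoxes
end
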